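/- Let n be a natural number and let X and Y be finite sets (Finsets) of vectors in Fin n → ZMod 2. Suppose there exists c ∈ ZMod 2 such that for every x ∈ X and every y ∈ Y the inner product ∑ i, x i * y i equals c. Then X.card * Y.card ≤ 2^n. -/

import Mathlib

/-! Fix `y₀ ∈ Y`. All `x ∈ X` pair to the same value with `y` and with `y₀`, so the translate
`Y - y₀` lies in the orthogonal complement of `W = span X`. For a nondegenerate form
`dim W + dim W^⊥ = dim V`, hence `|X| · |Y| ≤ |W| · |W^⊥| = |V| = 2^n`. -/

open Finset Module

theorem dotProductBilin_nondegenerate (R ι : Type*) [CommSemiring R] [Fintype ι] :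
    (dotProductBilin R R : LinearMap.BilinForm R (ι → R)).Nondegenerate :=
  ⟨fun x hx ↦ dotProduct_eq_zero x hx,
    fun y hy ↦ dotProduct_eq_zero y fun x ↦ dotProduct_comm y x ▸ hy x⟩

theorem Finset.card_le_natCard_of_coe_subset {α : Type*} {s : Finset α} {t : Set α} [Finite t]
    (h : ↑s ⊆ t) : #s ≤ Nat.card t := by
  simpa using Nat.card_mono (Set.toFinite t) h

namespace LinearMap.BilinForm

variable {K V : Type*} [Field K] [AddCommGroup V] [Module K V] {B : LinearMap.BilinForm K V}

theorem natCard_mul_natCard_orthogonal [FiniteDimensional K V] (hB : B.Nondegenerate)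
    (W : Submodule K V) : Nat.card W * Nat.card (B.orthogonal W) = Nat.card V := by
  rw [natCard_eq_pow_finrank (K := K) (V := W), natCard_eq_pow_finrank (K := K) (V := V),
    natCard_eq_pow_finrank (K := K) (V := B.orthogonal W), ← pow_add, finrank_orthogonal hB,
    Nat.add_sub_cancel' (Submodule.finrank_le W)]

theorem sub_mem_orthogonal_span {s : Set V} {y y' : V} (h : ∀ x ∈ s, B x y = B x y') :
    y - y' ∈ B.orthogonal (Submodule.span K s) := fun z hz ↦
  (Submodule.span_le (p := LinearMap.ker (B.flip (y - y')))).mpr (fun x hx ↦ by simp [h x hx]) hz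

theorem card_mul_card_le_of_forall_apply_eq [Finite V] (hB : B.Nondegenerate)
    {X Y : Finset V} {c : K} (h : ∀ x ∈ X, ∀ y ∈ Y, B x y = c) : #X * #Y ≤ Nat.card V := by
  rcases Y.eq_empty_or_nonempty with rfl | ⟨y₀, hy₀⟩
  · simp
  set W := Submodule.span K (X : Set V)
  have hX : #X ≤ Nat.card W := card_le_natCard_of_coe_subset Submodule.subset_span
  have hY : #Y ≤ Nat.card (B.orthogonal W) := by
    rw [← card_map (Equiv.subRight y₀).toEmbedding]
    refine card_le_natCard_of_coe_subset ?_
    simp only [coe_map, Set.image_subset_iff]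
    intro y hy
    exact sub_mem_orthogonal_span fun x hx ↦ (h x hx y hy).trans (h x hx y₀ hy₀).symm
  calc #X * #Y ≤ Nat.card W * Nat.card (B.orthogonal W) := Nat.mul_le_mul hX hY
    _ = Nat.card V := natCard_mul_natCard_orthogonal hB W

end LinearMap.BilinForm

theorem monochromatic_rectangle_card_le
    (n : ℕ) (X Y : Finset (Fin n → ZMod 2))
    (h : ∃ c : ZMod 2, ∀ x ∈ X, ∀ y ∈ Y, ∑ i, x i * y i = c) :
    X.card * Y.card ≤ 2 ^ n := by
  obtain ⟨c, hc⟩ := h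
  simpa using LinearMap.BilinForm.card_mul_card_le_of_forall_apply_eq
    (dotProductBilin_nondegenerate (ZMod 2) (Fin n)) hc
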